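/- For every integer r ≥ 2 there exists a constant A_r > 0 such that for every probability mass function (p_k)_{k≥r} on the integers k ≥ r, the quantity p_c := 1 - 1/(max_{x∈[0,1]} G^r(x)) satisfies p_c ≤ ∑_{k≥r} p_k · A_r · k^{-r/(r-1)}, where G^r(x) = ∑_{k≥r} p_k · g_k^r(x). -/
import Mathlib

set_option maxHeartbeats 1000000



open Finset

/-- Upper tail of the binomial expansion: `∑_{i=n}^{N} C(N,i) s^i x^(N-i)`. -/
noncomputable def Rt (x s : ℝ) (n N : ℕ) : ℝ :=
  ∑ i ∈ Finset.Ico n (N + 1), (N.choose i : ℝ) * s ^ i * x ^ (N - i)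

variable {x s : ℝ}

private lemma shiftIco (f : ℕ → ℝ) (a b : ℕ) :
    ∑ i ∈ Finset.Ico (a + 1) (b + 1), f i = ∑ j ∈ Finset.Ico a b, f (j + 1) := by
  rw [Finset.sum_Ico_eq_sum_range, Finset.sum_Ico_eq_sum_range]
  have h : b + 1 - (a + 1) = b - a := by omega
  rw [h]
  exact Finset.sum_congr rfl fun i _ => by congr 1; omega

lemma Rt_zero (hxs : x + s = 1) (N : ℕ) : Rt x s 0 N = 1 := by
  have h := add_pow s x N
  rw [add_comm s x, hxs, one_pow] at h
  rw [Rt, ← Finset.range_eq_Ico]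
  refine Eq.trans (Finset.sum_congr rfl fun i _ => ?_) h.symm
  ring

lemma Rt_nonneg (hx : 0 ≤ x) (hs : 0 ≤ s) (n N : ℕ) : 0 ≤ Rt x s n N :=
  Finset.sum_nonneg fun i _ => by positivity

lemma Rt_anti (hx : 0 ≤ x) (hs : 0 ≤ s) (n N : ℕ) : Rt x s (n + 1) N ≤ Rt x s n N :=
  Finset.sum_le_sum_of_subset_of_nonneg
    (Finset.Ico_subset_Ico (Nat.le_succ n) le_rfl) (fun i _ _ => by positivity)

lemma Rt_pascal (n N : ℕ) :
    Rt x s (n + 1) (N + 1) = x * Rt x s (n + 1) N + s * Rt x s n N := by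
  unfold Rt
  rw [show N + 1 + 1 = N + 2 from rfl,
    shiftIco (fun i => ((N+1).choose i : ℝ) * s ^ i * x ^ (N + 1 - i)) n (N + 1)]
  have hterm : ∀ j ∈ Finset.Ico n (N+1),
      ((N+1).choose (j+1) : ℝ) * s ^ (j+1) * x ^ (N + 1 - (j+1))
      = (N.choose (j+1) : ℝ) * s ^ (j+1) * x ^ (N - j)
        + s * ((N.choose j : ℝ) * s ^ j * x ^ (N - j)) := by
    intro j hj
    rw [Nat.choose_succ_succ, Nat.succ_sub_succ]
    push_cast
    ring
  rw [Finset.sum_congr rfl hterm, Finset.sum_add_distrib, ← Finset.mul_sum]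
  congr 1
  -- ∑_{j ∈ Ico n (N+1)} C(N,j+1) s^(j+1) x^(N-j) = x * ∑_{i ∈ Ico (n+1) (N+1)} C(N,i) s^i x^(N-i)
  have hdrop : ∑ j ∈ Finset.Ico n (N+1), (N.choose (j+1) : ℝ) * s ^ (j+1) * x ^ (N - j)
      = ∑ j ∈ Finset.Ico n N, (N.choose (j+1) : ℝ) * s ^ (j+1) * x ^ (N - j) := by
    by_cases hn : n ≤ N
    · rw [Finset.sum_Ico_succ_top hn]
      simp [Nat.choose_succ_self]
    · rw [Finset.Ico_eq_empty (by omega), Finset.Ico_eq_empty (by omega)]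
  rw [hdrop, Finset.mul_sum,
    shiftIco (fun i => x * ((N.choose i : ℝ) * s ^ i * x ^ (N - i))) n N]
  refine Finset.sum_congr rfl fun j hj => ?_
  have hjN : j + 1 ≤ N := (Finset.mem_Ico.mp hj).2
  have hsub : N - j = (N - (j+1)) + 1 := by omega
  rw [hsub, pow_succ]
  ring

section RtProps
variable (hx : 0 ≤ x) (hs : 0 ≤ s) (hxs : x + s = 1)
include hx hs hxs

lemma Rt_mono_N (n N : ℕ) : Rt x s n N ≤ Rt x s n (N + 1) := by
  cases n with
  | zero => rw [Rt_zero hxs, Rt_zero hxs]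
  | succ n =>
      rw [Rt_pascal]
      have h1 : Rt x s (n + 1) N ≤ Rt x s n N := Rt_anti hx hs n N
      nlinarith [Rt_nonneg hx hs (n+1) N, Rt_nonneg hx hs n N]

lemma Rt_mono_N' (n : ℕ) : ∀ {N N' : ℕ}, N ≤ N' → Rt x s n N ≤ Rt x s n N' := by
  intro N N' h
  induction N' with
  | zero =>
      have hN : N = 0 := by omega
      subst hN; exact le_rfl
  | succ M ih =>
      rcases Nat.lt_or_ge N (M+1) with h' | h'
      · exact le_trans (ih (by omega)) (Rt_mono_N hx hs hxs n M)
      · have : N = M + 1 := by omega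
        subst this; rfl

/-- key grouping step -/
lemma Rt_step (n N M : ℕ) : Rt x s n N * (1 - x ^ M) ≤ Rt x s (n + 1) (N + M) := by
  induction M with
  | zero =>
      simp only [pow_zero, sub_self, mul_zero, Nat.add_zero]
      exact Rt_nonneg hx hs (n+1) N
  | succ M ih =>
      have hrec : Rt x s (n + 1) (N + M + 1) = x * Rt x s (n + 1) (N + M) + s * Rt x s n (N + M) :=
        Rt_pascal n (N + M)
      have hmono : Rt x s n N ≤ Rt x s n (N + M) := Rt_mono_N' hx hs hxs n (Nat.le_add_right N M)
      have h0 : 0 ≤ Rt x s n N := Rt_nonneg hx hs n N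
      calc Rt x s n N * (1 - x ^ (M + 1))
          = x * (Rt x s n N * (1 - x ^ M)) + s * Rt x s n N := by rw [pow_succ]; nlinarith [hxs]
        _ ≤ x * Rt x s (n + 1) (N + M) + s * Rt x s n (N + M) := by
            have := mul_le_mul_of_nonneg_left ih hx
            have := mul_le_mul_of_nonneg_left hmono hs
            linarith
        _ = Rt x s (n + 1) (N + M + 1) := hrec.symm

lemma Rt_group (r m : ℕ) : (1 - x ^ m) ^ r ≤ Rt x s r (r * m) := by
  have hxm : 1 - x ^ m ≤ 1 := by
    have : 0 ≤ x ^ m := by positivity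
    linarith
  have hx1' : x ≤ 1 := by nlinarith
  have hxm0 : 0 ≤ 1 - x ^ m := by
    have : x ^ m ≤ 1 := pow_le_one₀ hx hx1'
    linarith
  induction r with
  | zero => simp [Rt_zero hxs]
  | succ r ih =>
      have step := Rt_step hx hs hxs r (r * m) m
      calc (1 - x ^ m) ^ (r + 1) = (1 - x ^ m) ^ r * (1 - x ^ m) := by ring
        _ ≤ Rt x s r (r * m) * (1 - x ^ m) := mul_le_mul_of_nonneg_right ih hxm0
        _ ≤ Rt x s (r + 1) (r * m + m) := step
        _ = Rt x s (r + 1) ((r + 1) * m) := by ring_nf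

lemma Rt_ge (r m k : ℕ) (hmk : r * m ≤ k) : (1 - x ^ m) ^ r ≤ Rt x s r k :=
  le_trans (Rt_group hx hs hxs r m) (Rt_mono_N' hx hs hxs r hmk)

end RtProps




/-- The polynomial `g_k^r(x) = ∑_{i=0}^{r-1} C(k,i) x^(k-i-1) (1-x)^i`. -/
noncomputable def g (r k : ℕ) (x : ℝ) : ℝ :=
  ∑ i ∈ Finset.range r, (k.choose i : ℝ) * x ^ (k - i - 1) * (1 - x) ^ i

lemma g_nonneg (r k : ℕ) {x : ℝ} (hx0 : 0 ≤ x) (hx1 : x ≤ 1) : 0 ≤ g r k x :=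
  Finset.sum_nonneg fun i _ => by
    have : (0:ℝ) ≤ 1 - x := by linarith
    positivity

lemma x_mul_g (r k : ℕ) (hrk : r ≤ k) (x : ℝ) :
    x * g r k x = 1 - Rt x (1 - x) r k := by
  have hxs : x + (1 - x) = 1 := by ring
  have hsplit : Rt x (1-x) 0 k
      = (∑ i ∈ Finset.range r, (k.choose i : ℝ) * (1-x) ^ i * x ^ (k - i)) + Rt x (1-x) r k := by
    rw [Rt, Rt, Finset.range_eq_Ico,
      ← Finset.sum_Ico_consecutive _ (Nat.zero_le r) (by omega : r ≤ k + 1)]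
  have hg : x * g r k x = ∑ i ∈ Finset.range r, (k.choose i : ℝ) * (1-x) ^ i * x ^ (k - i) := by
    rw [g, Finset.mul_sum]
    refine Finset.sum_congr rfl fun i hi => ?_
    have hik : i < k := lt_of_lt_of_le (Finset.mem_range.mp hi) hrk
    have hexp : k - i = (k - i - 1) + 1 := by omega
    conv_rhs => rw [hexp]
    rw [pow_succ]
    ring
  rw [hg, Rt_zero hxs k] at *
  linarith [hsplit]

/-- Bernoulli-type upper bound: `(1-s)^m (1+ms) ≤ 1`. -/
lemma pow_mul_one_add_le (m : ℕ) {s : ℝ} (hs : 0 ≤ s) (hs1 : s ≤ 1) :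
    (1 - s) ^ m * (1 + m * s) ≤ 1 := by
  induction m with
  | zero => simp
  | succ m ih =>
      have hP : (0:ℝ) ≤ (1 - s) ^ m := pow_nonneg (by linarith) m
      have key : (0:ℝ) ≤ (1 - s) ^ m * ((m + 1) * s ^ 2) :=
        mul_nonneg hP (by positivity)
      rw [pow_succ]
      push_cast
      nlinarith [ih, key]

lemma g_crude (r k : ℕ) (hk : 1 ≤ k) {x : ℝ} (hx0 : 0 ≤ x) (hx1 : x ≤ 1) :
    g r k x ≤ (r : ℝ) * (k : ℝ) ^ (r - 1) := by
  have h1x : (0:ℝ) ≤ 1 - x := by linarith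
  have h1x1 : 1 - x ≤ 1 := by linarith
  have hbound : ∀ i ∈ Finset.range r,
      (k.choose i : ℝ) * x ^ (k - i - 1) * (1 - x) ^ i ≤ (k : ℝ) ^ (r - 1) := by
    intro i hi
    have hi' : i ≤ r - 1 := by have := Finset.mem_range.mp hi; omega
    have h1 : (k.choose i : ℝ) ≤ (k : ℝ) ^ i := by
      exact_mod_cast Nat.choose_le_pow k i
    have h2 : (k : ℝ) ^ i ≤ (k : ℝ) ^ (r - 1) :=
      pow_le_pow_right₀ (by exact_mod_cast hk) hi'
    have h3 : x ^ (k - i - 1) ≤ 1 := pow_le_one₀ hx0 hx1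
    have h4 : (1 - x) ^ i ≤ 1 := pow_le_one₀ h1x h1x1
    have hc : (0:ℝ) ≤ (k.choose i : ℝ) := by positivity
    calc (k.choose i : ℝ) * x ^ (k - i - 1) * (1 - x) ^ i
        ≤ (k.choose i : ℝ) * 1 * 1 := by
          apply mul_le_mul (mul_le_mul le_rfl h3 (by positivity) hc) h4 (by positivity)
          positivity
      _ = (k.choose i : ℝ) := by ring
      _ ≤ (k : ℝ) ^ (r - 1) := le_trans h1 h2
  calc g r k x ≤ ∑ _i ∈ Finset.range r, (k : ℝ) ^ (r - 1) := Finset.sum_le_sum hbound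
    _ = (r : ℝ) * (k : ℝ) ^ (r - 1) := by
        rw [Finset.sum_const, Finset.card_range, nsmul_eq_mul]

private lemma mid_helper {t u : ℝ} (ht : 0 ≤ t) (ht1 : t ≤ 1) (hu : 0 ≤ u)
    (h1 : u * (1 + t) ≤ 1) : u ≤ 1 - t / 2 := by nlinarith

private lemma tail_helper {t u : ℝ} (ht : 1 < t) (hu : 0 ≤ u)
    (h1 : u * (1 + t) ≤ 1) : u ≤ 1 / 2 := by nlinarith

lemma g_le_one_add (r : ℕ) (hr : 2 ≤ r) :
    ∃ A : ℝ, 0 < A ∧ ∀ k, r ≤ k → ∀ x : ℝ, 0 ≤ x → x ≤ 1 →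
      g r k x ≤ 1 + A * (k : ℝ) ^ (-(r : ℝ) / ((r : ℝ) - 1)) := by
  have hr0 : 0 < r := by omega
  set M : ℕ := 2 ^ (r + 1) * r with hM
  set K : ℕ := r * M with hKdef
  have hM2 : 16 ≤ M := by
    have h1 : 2 ^ 3 ≤ 2 ^ (r + 1) := Nat.pow_le_pow_right (by norm_num) (by omega)
    calc 16 = 2 ^ 3 * 2 := by norm_num
      _ ≤ 2 ^ (r + 1) * r := Nat.mul_le_mul h1 hr
  have hKr : r < K := by
    calc r = r * 1 := by ring
      _ < r * M := by
          have h1 : 1 < M := by omega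
          calc r * 1 < r * M := by exact Nat.mul_lt_mul_of_le_of_lt le_rfl h1 hr0
            _ = r * M := rfl
  set A : ℝ := ((32 * r ^ 2 + r * K ^ (r + 1) : ℕ) : ℝ) with hA
  have hApos : 0 < A := by
    have h : 0 < 32 * r ^ 2 + r * K ^ (r + 1) :=
      Nat.add_pos_left (Nat.mul_pos (by norm_num) (pow_pos hr0 2)) _
    rw [hA]
    exact_mod_cast h
  refine ⟨A, hApos, ?_⟩
  set e : ℝ := -(r : ℝ) / ((r : ℝ) - 1) with he
  have hr1 : (1 : ℝ) < (r : ℝ) := by exact_mod_cast hr.trans_lt' one_lt_two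
  have hrr : (0 : ℝ) < (r : ℝ) - 1 := by linarith
  have he_neg : e < 0 := by
    rw [he, neg_div]
    have : 0 < (r : ℝ) / ((r : ℝ) - 1) := by positivity
    linarith
  have he_ge : (-2 : ℝ) ≤ e := by
    rw [he, neg_div, neg_le_neg_iff, div_le_iff₀ hrr]
    have : (2:ℝ) ≤ (r:ℝ) := by exact_mod_cast hr
    linarith
  have hnege : -e ≤ 2 := by linarith
  intro k hk x hx0 hx1
  have hk1 : 1 ≤ k := by omega
  have hk1' : (1 : ℝ) ≤ (k : ℝ) := by exact_mod_cast hk1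
  have hke_pos : (0 : ℝ) < (k : ℝ) ^ e := Real.rpow_pos_of_pos (by linarith) e
  by_cases hkK : k < K
  · -- small k : crude bound
    have hg := g_crude r k hk1 hx0 hx1
    have hkK' : (k : ℝ) ≤ (K : ℝ) := by exact_mod_cast hkK.le
    have hK1 : (1 : ℝ) ≤ (K : ℝ) := by
      have : 1 ≤ K := by omega
      exact_mod_cast this
    have h1 : (k : ℝ) ^ (-2 : ℝ) ≤ (k : ℝ) ^ e :=
      Real.rpow_le_rpow_of_exponent_le hk1' he_ge
    have h2 : (k : ℝ) ^ (-2 : ℝ) = ((k : ℝ) ^ 2)⁻¹ := by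
      rw [show (-2 : ℝ) = -((2 : ℕ) : ℝ) by norm_num, Real.rpow_neg (by positivity),
        Real.rpow_natCast]
    have h3 : ((K : ℝ) ^ 2)⁻¹ ≤ ((k : ℝ) ^ 2)⁻¹ := by
      apply inv_anti₀ (by positivity)
      exact pow_le_pow_left₀ (by positivity) hkK' 2
    have hA2 : ((r : ℝ) * (K : ℝ) ^ (r + 1)) ≤ A := by
      rw [hA]
      push_cast
      nlinarith [sq_nonneg (r : ℝ)]
    have hKexp : (K : ℝ) ^ (r + 1) = (K : ℝ) ^ (r - 1) * (K : ℝ) ^ 2 := by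
      rw [← pow_add]
      congr 1
      omega
    have h4 : (r : ℝ) * (k : ℝ) ^ (r - 1) ≤ (r : ℝ) * (K : ℝ) ^ (r - 1) := by
      apply mul_le_mul_of_nonneg_left _ (by positivity)
      exact pow_le_pow_left₀ (by positivity) hkK' (r - 1)
    have h5 : (r : ℝ) * (K : ℝ) ^ (r - 1) = (r : ℝ) * (K : ℝ) ^ (r + 1) * ((K : ℝ) ^ 2)⁻¹ := by
      rw [hKexp]
      have hKne : ((K:ℝ) ^ 2) ≠ 0 := by positivity
      field_simp
    have h6 : (r : ℝ) * (K : ℝ) ^ (r + 1) * ((K : ℝ) ^ 2)⁻¹ ≤ A * ((k : ℝ) ^ 2)⁻¹ := by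
      apply mul_le_mul hA2 h3 (by positivity) hApos.le
    have h7 : A * ((k : ℝ) ^ 2)⁻¹ ≤ A * (k : ℝ) ^ e := by
      apply mul_le_mul_of_nonneg_left _ hApos.le
      rw [← h2]; exact h1
    linarith
  · -- large k
    push_neg at hkK
    set m : ℕ := k / r with hm
    have hmM : M ≤ m := by
      rw [hm, Nat.le_div_iff_mul_le hr0, Nat.mul_comm]
      exact hkK
    have hm1 : 1 ≤ m := by omega
    have hrm : r * m ≤ k := by
      rw [hm, Nat.mul_comm]
      exact Nat.div_mul_le_self k r
    have hdm := Nat.div_add_mod k r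
    have hmod : k % r < r := Nat.mod_lt _ hr0
    have hkrm : k < r * m + r := by
      conv_lhs => rw [← hdm]
      exact Nat.add_lt_add_left hmod _
    have hk2m : (k : ℝ) ≤ 2 * (r : ℝ) * (m : ℝ) := by
      have h1 : k ≤ r * m + r * m := by
        have h2 : r ≤ r * m := Nat.le_mul_of_pos_right r hm1
        omega
      have := (Nat.cast_le (α := ℝ)).mpr h1
      push_cast at this
      linarith
    have hm16 : (16 : ℝ) ≤ (m : ℝ) := by
      have : 16 ≤ m := le_trans hM2 hmM
      exact_mod_cast this
    have hkr : r < k := lt_of_lt_of_le hKr hkK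
    rcases eq_or_lt_of_le hx0 with hx0' | hxpos
    · -- x = 0
      have hgz : g r k x = 0 := by
        rw [g]
        apply Finset.sum_eq_zero
        intro i hi
        have hi' : i < r := Finset.mem_range.mp hi
        have : x ^ (k - i - 1) = 0 := by
          rw [← hx0']
          exact zero_pow (by omega)
        rw [this]; ring
      rw [hgz]
      positivity
    · -- x > 0
      set s : ℝ := 1 - x with hsdef
      have hs0 : 0 ≤ s := by rw [hsdef]; linarith
      have hs1 : s ≤ 1 := by rw [hsdef]; linarith
      have hxs : x + s = 1 := by rw [hsdef]; ring
      have hQ : (1 - x ^ m) ^ r ≤ Rt x s r k := Rt_ge hx0 hs0 hxs r m k hrm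
      have hAke : 0 ≤ A * (k : ℝ) ^ e * x := by positivity
      have hxm1 : x ^ m ≤ 1 := pow_le_one₀ hx0 hx1
      have hQ0 : (0 : ℝ) ≤ 1 - x ^ m := by linarith [pow_le_one₀ hx0 hx1 (n := m)]
      suffices hsQ : s ≤ (1 - x ^ m) ^ r + A * (k : ℝ) ^ e * x by
        have hxg := x_mul_g r k hk x
        have h2 : x * g r k x ≤ x * (1 + A * (k : ℝ) ^ e) := by
          rw [hxg]
          have hring : x * (1 + A * (k : ℝ) ^ e) = x + A * (k : ℝ) ^ e * x := by ring
          rw [hring]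
          linarith [hQ, hsQ, hxs]
        exact le_of_mul_le_mul_left h2 hxpos
      -- core inequality: s ≤ (1 - x^m)^r + A k^e x
      have hm1' : m - 1 + 1 = m := by omega
      have hcastm1 : ((m - 1 : ℕ) : ℝ) = (m : ℝ) - 1 := by
        push_cast [Nat.cast_sub hm1]
        ring
      by_cases hc : (r : ℝ) * x ^ (m - 1) ≤ 1
      · -- Bernoulli case: s ≤ (1 - x^m)^r
        have hber : 1 - (r : ℝ) * x ^ m ≤ (1 - x ^ m) ^ r := by
          have hge : (-2 : ℝ) ≤ -(x ^ m) := by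
            have := pow_nonneg hx0 m
            linarith
          have h := one_add_mul_le_pow hge r
          calc 1 - (r : ℝ) * x ^ m = 1 + (r : ℝ) * (-(x ^ m)) := by ring
            _ ≤ (1 + -(x ^ m)) ^ r := h
            _ = (1 - x ^ m) ^ r := by rw [← sub_eq_add_neg]
        have hrx : (r : ℝ) * x ^ m ≤ x := by
          have hxm : x ^ m = x ^ (m - 1) * x := by
            rw [← pow_succ, hm1']
          calc (r : ℝ) * x ^ m = ((r : ℝ) * x ^ (m - 1)) * x := by rw [hxm]; ring
            _ ≤ 1 * x := mul_le_mul_of_nonneg_right hc hx0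
            _ = x := one_mul x
        have : s ≤ (1 - x ^ m) ^ r := by
          rw [hsdef]
          linarith
        linarith
      · push_neg at hc
        -- derive (m-1) s ≤ r - 1
        have hxm1pos : 0 < x ^ (m - 1) := pow_pos hxpos _
        have haux1 := pow_mul_one_add_le (m - 1) hs0 hs1
        have haux1' : x ^ (m - 1) * (1 + ((m : ℝ) - 1) * s) ≤ 1 := by
          rw [← hcastm1]
          have hxx : (1 : ℝ) - s = x := by rw [hsdef]; ring
          rw [← hxx]
          exact haux1
        have hs_small : ((m : ℝ) - 1) * s ≤ (r : ℝ) - 1 := by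
          have h1 : x ^ (m - 1) * (1 + ((m : ℝ) - 1) * s) < x ^ (m - 1) * (r : ℝ) := by
            calc x ^ (m - 1) * (1 + ((m : ℝ) - 1) * s) ≤ 1 := haux1'
              _ < (r : ℝ) * x ^ (m - 1) := hc
              _ = x ^ (m - 1) * (r : ℝ) := by ring
          have h2 : 1 + ((m : ℝ) - 1) * s < (r : ℝ) :=
            lt_of_mul_lt_mul_left h1 hxm1pos.le
          linarith
        have haux2 := pow_mul_one_add_le m hs0 hs1
        have haux2' : x ^ m * (1 + (m : ℝ) * s) ≤ 1 := by
          have hxx : (1 : ℝ) - s = x := by rw [hsdef]; ring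
          rw [← hxx]
          exact haux2
        have hms0 : 0 ≤ (m : ℝ) * s := by positivity
        by_cases hms : (m : ℝ) * s ≤ 1
        · -- middle regime
          have hxm_le : x ^ m ≤ 1 - (m : ℝ) * s / 2 :=
            mid_helper hms0 hms (pow_nonneg hx0 m) haux2'
          have hhalf : (m : ℝ) * s / 2 ≤ 1 - x ^ m := by linarith
          have hQ2 : ((m : ℝ) * s / 2) ^ r ≤ (1 - x ^ m) ^ r :=
            pow_le_pow_left₀ (by positivity) hhalf r
          set c : ℝ := ((m : ℝ) / 2) ^ r with hcdef
          have hcs : ((m : ℝ) * s / 2) ^ r = c * s ^ r := by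
            rw [hcdef, show (m : ℝ) * s / 2 = ((m : ℝ) / 2) * s by ring, mul_pow]
          have hc_pos : 0 < c := by
            rw [hcdef]; positivity
          set d : ℝ := c ^ (-(1 : ℝ) / ((r : ℝ) - 1)) with hddef
          have hd_pos : 0 < d := Real.rpow_pos_of_pos hc_pos _
          -- s - c s^r ≤ d
          have hkey : s - c * s ^ r ≤ d := by
            by_cases hsd : s ≤ d
            · linarith [mul_nonneg hc_pos.le (pow_nonneg hs0 r)]
            · push_neg at hsd
              have hdr : d ^ (r - 1) = c⁻¹ := by
                rw [hddef, ← Real.rpow_natCast (c ^ (-(1 : ℝ) / ((r : ℝ) - 1))) (r - 1),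
                  ← Real.rpow_mul hc_pos.le]
                have hcast : ((r - 1 : ℕ) : ℝ) = (r : ℝ) - 1 := by
                  push_cast [Nat.cast_sub (by omega : 1 ≤ r)]
                  ring
                rw [hcast, div_mul_cancel₀, Real.rpow_neg_one]
                exact ne_of_gt hrr
              have hpow : d ^ (r - 1) ≤ s ^ (r - 1) :=
                pow_le_pow_left₀ hd_pos.le hsd.le (r - 1)
              have hcs1 : 1 ≤ c * s ^ (r - 1) := by
                calc (1 : ℝ) = c * c⁻¹ := by
                      field_simp
                  _ = c * d ^ (r - 1) := by rw [hdr]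
                  _ ≤ c * s ^ (r - 1) := mul_le_mul_of_nonneg_left hpow hc_pos.le
              have hsr : s ^ r = s ^ (r - 1) * s := by
                rw [← pow_succ]
                congr 1
                omega
              have : s ≤ c * s ^ r := by
                calc s = 1 * s := (one_mul s).symm
                  _ ≤ (c * s ^ (r - 1)) * s := mul_le_mul_of_nonneg_right hcs1 hs0
                  _ = c * s ^ r := by rw [hsr]; ring
              linarith
          -- d ≤ 16 r² k^e
          have hd_eq : d = ((m : ℝ) / 2) ^ e := by
            rw [hddef, hcdef, ← Real.rpow_natCast ((m : ℝ) / 2) r,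
              ← Real.rpow_mul (by positivity)]
            congr 1
            rw [he]
            field_simp
          have hbase : (k : ℝ) / (4 * r) ≤ (m : ℝ) / 2 := by
            rw [div_le_div_iff₀ (by positivity) (by norm_num)]
            linarith [hk2m]
          have hbase_pos : (0 : ℝ) < (k : ℝ) / (4 * r) := by positivity
          have h6 : ((m : ℝ) / 2) ^ e ≤ ((k : ℝ) / (4 * r)) ^ e :=
            Real.rpow_le_rpow_of_nonpos hbase_pos hbase he_neg.le
          have h7 : ((k : ℝ) / (4 * r)) ^ e = (k : ℝ) ^ e / ((4 * r : ℝ)) ^ e :=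
            Real.div_rpow (by positivity) (by positivity) e
          have h8 : (k : ℝ) ^ e / ((4 * r : ℝ)) ^ e = (k : ℝ) ^ e * ((4 * r : ℝ)) ^ (-e) := by
            rw [Real.rpow_neg (by positivity)]
            ring
          have h9 : ((4 * r : ℝ)) ^ (-e) ≤ ((4 * r : ℝ)) ^ (2 : ℝ) :=
            Real.rpow_le_rpow_of_exponent_le (by linarith) hnege
          have h10 : ((4 * r : ℝ)) ^ (2 : ℝ) = 16 * (r : ℝ) ^ 2 := by
            rw [show (2 : ℝ) = ((2 : ℕ) : ℝ) by norm_num, Real.rpow_natCast]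
            ring
          have hd_le : d ≤ 16 * (r : ℝ) ^ 2 * (k : ℝ) ^ e := by
            calc d = ((m : ℝ) / 2) ^ e := hd_eq
              _ ≤ ((k : ℝ) / (4 * r)) ^ e := h6
              _ = (k : ℝ) ^ e * ((4 * r : ℝ)) ^ (-e) := by rw [h7, h8]
              _ ≤ (k : ℝ) ^ e * (16 * (r : ℝ) ^ 2) := by
                  apply mul_le_mul_of_nonneg_left _ hke_pos.le
                  rw [← h10]; exact h9
              _ = 16 * (r : ℝ) ^ 2 * (k : ℝ) ^ e := by ring
          -- x ≥ 1/2
          have hx_half : (1 : ℝ) / 2 ≤ x := by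
            have h2s : 2 * s ≤ (m : ℝ) * s := mul_le_mul_of_nonneg_right (by linarith) hs0
            linarith [h2s, hms, hxs]
          have hA32 : 32 * (r : ℝ) ^ 2 ≤ A := by
            rw [hA]
            push_cast
            have h0 : (0 : ℝ) ≤ (r : ℝ) * (K : ℝ) ^ (r + 1) := by positivity
            linarith
          have h11 : 16 * (r : ℝ) ^ 2 * (k : ℝ) ^ e ≤ A * (k : ℝ) ^ e * x := by
            have h12 : 16 * (r : ℝ) ^ 2 ≤ A * x := by
              have h13 : A * (1 / 2) ≤ A * x := mul_le_mul_of_nonneg_left hx_half hApos.le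
              linarith
            have h14 := mul_le_mul_of_nonneg_right h12 hke_pos.le
            linarith [h14]
          linarith [hQ2, hcs, hkey, hd_le, h11]
        · -- s ≥ 1/m : tail regime
          push_neg at hms
          have hxm_half : x ^ m ≤ 1 / 2 :=
            tail_helper hms (pow_nonneg hx0 m) haux2'
          have hhalf2 : (1 : ℝ) / 2 ≤ 1 - x ^ m := by linarith
          have hQ3 : ((1 : ℝ) / 2) ^ r ≤ (1 - x ^ m) ^ r :=
            pow_le_pow_left₀ (by norm_num) hhalf2 r
          have h2r : (1 : ℝ) ≤ 2 ^ r := one_le_pow₀ (by norm_num)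
          have hMm : ((r : ℝ) - 1) * 2 ^ r ≤ (m : ℝ) - 1 := by
            have hMcast : (M : ℝ) = 2 ^ (r + 1) * (r : ℝ) := by
              rw [hM]; push_cast; ring
            have hmM' : (M : ℝ) ≤ (m : ℝ) := by exact_mod_cast hmM
            have : ((r : ℝ) - 1) * 2 ^ r + 1 ≤ 2 ^ (r + 1) * (r : ℝ) := by
              rw [pow_succ]
              have h15 : (1 : ℝ) * ((r : ℝ) + 1) ≤ 2 ^ r * ((r : ℝ) + 1) :=
                mul_le_mul_of_nonneg_right h2r (by linarith)
              nlinarith [h15, hr1]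
            linarith [hMcast ▸ hmM']
          have hs2r : s * 2 ^ r ≤ 1 := by
            have h13 : s * (((r : ℝ) - 1) * 2 ^ r) ≤ s * ((m : ℝ) - 1) :=
              mul_le_mul_of_nonneg_left hMm hs0
            have h14 : s * ((m : ℝ) - 1) ≤ (r : ℝ) - 1 := by
              calc s * ((m : ℝ) - 1) = ((m : ℝ) - 1) * s := by ring
                _ ≤ (r : ℝ) - 1 := hs_small
            have h16 : (s * 2 ^ r) * ((r : ℝ) - 1) ≤ 1 * ((r : ℝ) - 1) := by
              calc (s * 2 ^ r) * ((r : ℝ) - 1) = s * (((r : ℝ) - 1) * 2 ^ r) := by ring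
                _ ≤ s * ((m : ℝ) - 1) := h13
                _ ≤ (r : ℝ) - 1 := h14
                _ = 1 * ((r : ℝ) - 1) := (one_mul _).symm
            exact le_of_mul_le_mul_right h16 hrr
          have hs_le : s ≤ ((1 : ℝ) / 2) ^ r := by
            have h2rpos : (0 : ℝ) < 2 ^ r := by positivity
            have heq : ((1 : ℝ) / 2) ^ r = 1 / 2 ^ r := by
              rw [div_pow, one_pow]
            rw [heq, le_div_iff₀ h2rpos]
            exact hs2r
          linarith [hQ3]


lemma g_one (r k : ℕ) (hr : 1 ≤ r) : g r k 1 = 1 := by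
  rw [g]
  rw [Finset.sum_eq_single 0]
  · norm_num
  · intro i _ hne
    have : ((1 : ℝ) - 1) ^ i = 0 := by
      rw [sub_self]
      exact zero_pow hne
    rw [this]
    ring
  · intro h0
    exact absurd (Finset.mem_range.mpr (by omega)) h0


/-- For every `r ≥ 2` there is a constant `A > 0` such that for every offspring
distribution `(p_k)_{k≥r}`, the critical probability `p_c = 1 - 1/(max_{x∈[0,1]} G^r(x))`
satisfies `p_c ≤ ∑_{k≥r} p_k · A · k^(-r/(r-1))`. -/
theorem pc_upper_bound_neg_moment (r : ℕ) (hr : 2 ≤ r) :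
    ∃ A : ℝ, 0 < A ∧
      ∀ p : ℕ → ℝ, (∀ k, k < r → p k = 0) → (∀ k, 0 ≤ p k) → (∑' k : ℕ, p k = 1) →
        1 - 1 / sSup ((fun x => ∑' k : ℕ, p k * g r k x) '' Set.Icc (0 : ℝ) 1) ≤
          ∑' k : ℕ, p k * A * (k : ℝ) ^ (-(r : ℝ) / ((r : ℝ) - 1)) := by
  obtain ⟨A, hApos, hA⟩ := g_le_one_add r hr
  refine ⟨A, hApos, ?_⟩
  intro p hp0 hpnn hsum
  set e : ℝ := -(r : ℝ) / ((r : ℝ) - 1) with he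
  have hr1 : (1 : ℝ) < (r : ℝ) := by exact_mod_cast hr.trans_lt' one_lt_two
  have hrr : (0 : ℝ) < (r : ℝ) - 1 := by linarith
  have he_neg : e < 0 := by
    rw [he, neg_div]
    have : 0 < (r : ℝ) / ((r : ℝ) - 1) := by positivity
    linarith
  have hsp : Summable p := by
    by_contra hns
    rw [tsum_eq_zero_of_not_summable hns] at hsum
    norm_num at hsum
  have hterm_nonneg : ∀ k : ℕ, 0 ≤ p k * A * (k : ℝ) ^ e := fun k =>
    mul_nonneg (mul_nonneg (hpnn k) hApos.le) (Real.rpow_nonneg (Nat.cast_nonneg k) e)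
  have hle1 : ∀ k : ℕ, (k : ℝ) ^ e ≤ 1 := by
    intro k
    rcases Nat.eq_zero_or_pos k with h | h
    · subst h
      rw [Nat.cast_zero, Real.zero_rpow (ne_of_lt he_neg)]
      norm_num
    · exact Real.rpow_le_one_of_one_le_of_nonpos (by exact_mod_cast h) he_neg.le
  have hSummE : Summable (fun k => p k * A * (k : ℝ) ^ e) := by
    apply Summable.of_nonneg_of_le hterm_nonneg (fun k => ?_) (hsp.mul_right A)
    calc p k * A * (k : ℝ) ^ e ≤ p k * A * 1 :=
          mul_le_mul_of_nonneg_left (hle1 k) (mul_nonneg (hpnn k) hApos.le)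
      _ = p k * A := by ring
  set E : ℝ := ∑' k : ℕ, p k * A * (k : ℝ) ^ e with hE
  have hE0 : 0 ≤ E := tsum_nonneg hterm_nonneg
  have hpt : ∀ x ∈ Set.Icc (0 : ℝ) 1, ∀ k : ℕ,
      p k * g r k x ≤ p k + p k * A * (k : ℝ) ^ e := by
    intro x hx k
    rcases lt_or_ge k r with hlt | hge
    · rw [hp0 k hlt]
      simp
    · have h1 := hA k hge x hx.1 hx.2
      have h2 : p k * g r k x ≤ p k * (1 + A * (k : ℝ) ^ e) :=
        mul_le_mul_of_nonneg_left h1 (hpnn k)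
      calc p k * g r k x ≤ p k * (1 + A * (k : ℝ) ^ e) := h2
        _ = p k + p k * A * (k : ℝ) ^ e := by ring
  have hSummG : ∀ x ∈ Set.Icc (0 : ℝ) 1, Summable (fun k => p k * g r k x) := by
    intro x hx
    exact Summable.of_nonneg_of_le
      (fun k => mul_nonneg (hpnn k) (g_nonneg r k hx.1 hx.2))
      (hpt x hx) (hsp.add hSummE)
  have hGle : ∀ x ∈ Set.Icc (0 : ℝ) 1, (∑' k : ℕ, p k * g r k x) ≤ 1 + E := by
    intro x hx
    calc (∑' k : ℕ, p k * g r k x)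
        ≤ ∑' k : ℕ, (p k + p k * A * (k : ℝ) ^ e) :=
          Summable.tsum_le_tsum (hpt x hx) (hSummG x hx) (hsp.add hSummE)
      _ = (∑' k : ℕ, p k) + E := Summable.tsum_add hsp hSummE
      _ = 1 + E := by rw [hsum]
  set S : Set ℝ := (fun x => ∑' k : ℕ, p k * g r k x) '' Set.Icc (0 : ℝ) 1 with hS
  have hbdd : ∀ y ∈ S, y ≤ 1 + E := by
    rintro y ⟨x, hx, rfl⟩
    exact hGle x hx
  have hsup_le : sSup S ≤ 1 + E := Real.sSup_le hbdd (by linarith)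
  have hG1 : (∑' k : ℕ, p k * g r k 1) = 1 := by
    have : ∀ k : ℕ, p k * g r k 1 = p k := fun k => by
      rw [g_one r k (by omega)]
      ring
    rw [tsum_congr this]
    exact hsum
  have hmem : (1 : ℝ) ∈ S := ⟨1, ⟨by norm_num, le_rfl⟩, hG1⟩
  have h1le : (1 : ℝ) ≤ sSup S := le_csSup ⟨1 + E, fun y hy => hbdd y hy⟩ hmem
  have hMpos : 0 < sSup S := lt_of_lt_of_le one_pos h1le
  have hMcancel : sSup S * (1 / sSup S) = 1 := mul_one_div_cancel hMpos.ne'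
  have hdiv : 1 - 1 / sSup S ≤ sSup S - 1 := by
    nlinarith [sq_nonneg (sSup S - 1), hMcancel, hMpos]
  linarith [hsup_le, hdiv]
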